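/- Let P be a finite set of points in the plane, let p, q ∈ P be distinct, and assume no point of P ∖ {p, q} lies on the line through p and q. Then there exists no closed disc D with p, q on its boundary and with open interior disjoint from P, if and only if there exist points a, b ∈ P ∖ {p, q} lying in opposite open halfplanes bounded by line pq such that b lies in the open interior of the circumdisc of p, q, a. -/

import Mathlib

/-!
The centres of the circles through `p` and `q` form the perpendicular bisector of `pq`, which we
parametrise as `t ↦ bisectorPoint p q t`. For the circle with parameter `t`,
`‖x - c‖² - ‖p - c‖² = ⟪x - p, x - q⟫ - 2 t · orient p q x`, so a point `x` off the line `pq` lies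
strictly inside it iff `t` is beyond the parameter `circumParam p q x` of the circle through
`p, q, x`: above it when `x` is on the positive side, below it when `x` is on the negative side.
Hence an empty disc exists iff every negative-side parameter is at most every positive-side one,
and a violating pair is exactly a negative-side point whose parameter exceeds that of a
positive-side point.
-/

noncomputable section

/-- Points of the Euclidean plane. -/
abbrev Pt := EuclideanSpace ℝ (Fin 2)

/-- The orientation (cross product) determinant of the triple `(p, q, r)`. -/
def orient (p q r : Pt) : ℝ :=
  (q 0 - p 0) * (r 1 - p 1) - (q 1 - p 1) * (r 0 - p 0)

open Finset

theorem Finset.exists_forall_le_and_forall_le_iff {ι κ α : Type*} [LinearOrder α] [Nonempty α]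
    (s : Finset ι) (t : Finset κ) (f : ι → α) (g : κ → α) :
    (∃ c, (∀ i ∈ s, f i ≤ c) ∧ ∀ j ∈ t, c ≤ g j) ↔ ∀ i ∈ s, ∀ j ∈ t, f i ≤ g j := by
  refine ⟨fun ⟨c, hs, ht⟩ i hi j hj => (hs i hi).trans (ht j hj), fun h => ?_⟩
  by_cases hsne : s.Nonempty
  · exact ⟨s.sup' hsne f, fun i hi => le_sup' f hi, fun j hj => sup'_le hsne f (h · · j hj)⟩
  by_cases htne : t.Nonempty
  · exact ⟨t.inf' htne g, fun i hi => absurd ⟨i, hi⟩ hsne, fun j hj => inf'_le g hj⟩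
  exact ⟨Classical.arbitrary α, fun i hi => absurd ⟨i, hi⟩ hsne, fun j hj => absurd ⟨j, hj⟩ htne⟩

lemma Pt.dist_sq_eq (x y : Pt) : dist x y ^ 2 = (x 0 - y 0) ^ 2 + (x 1 - y 1) ^ 2 := by
  simp [EuclideanSpace.dist_sq_eq, Fin.sum_univ_two, Real.dist_eq, sq_abs]

@[simp] lemma orient_self_left (p q : Pt) : orient p q p = 0 := by simp [orient]

@[simp] lemma orient_self_right (p q : Pt) : orient p q q = 0 := by rw [orient]; ring

/-- `t = 0` is the midpoint of `pq`; the direction `(p 1 - q 1, q 0 - p 0)` is `q - p` rotated by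
a quarter turn. -/
def bisectorPoint (p q : Pt) (t : ℝ) : Pt :=
  WithLp.toLp 2 ![(p 0 + q 0) / 2 + t * (p 1 - q 1), (p 1 + q 1) / 2 + t * (q 0 - p 0)]

/-- The power `⟪x - p, x - q⟫` of `x` with respect to the circle with diameter `pq`. -/
def diametralPower (p q x : Pt) : ℝ :=
  (x 0 - p 0) * (x 0 - q 0) + (x 1 - p 1) * (x 1 - q 1)

/-- The parameter of the centre of the circle through `p`, `q`, `x` (junk when `x` is on the line
`pq`). -/
def circumParam (p q x : Pt) : ℝ :=
  diametralPower p q x / (2 * orient p q x)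

section Bisector

variable {p q x : Pt} {t : ℝ}

lemma bisectorPoint_apply_zero : bisectorPoint p q t 0 = (p 0 + q 0) / 2 + t * (p 1 - q 1) := rfl

lemma bisectorPoint_apply_one : bisectorPoint p q t 1 = (p 1 + q 1) / 2 + t * (q 0 - p 0) := rfl

lemma dist_bisectorPoint_sq_sub :
    dist x (bisectorPoint p q t) ^ 2 - dist p (bisectorPoint p q t) ^ 2 =
      diametralPower p q x - 2 * t * orient p q x := by
  simp only [Pt.dist_sq_eq, bisectorPoint_apply_zero, bisectorPoint_apply_one, diametralPower,
    orient]
  ring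

lemma dist_right_bisectorPoint : dist q (bisectorPoint p q t) = dist p (bisectorPoint p q t) := by
  rw [← sq_eq_sq₀ dist_nonneg dist_nonneg, ← sub_eq_zero, dist_bisectorPoint_sq_sub]
  simp [diametralPower]

lemma exists_eq_bisectorPoint {c : Pt} (hpq : p ≠ q) (h : dist p c = dist q c) :
    ∃ t, c = bisectorPoint p q t := by
  have hD : (q 0 - p 0) ^ 2 + (q 1 - p 1) ^ 2 ≠ 0 := by
    rw [← Pt.dist_sq_eq]
    simpa [dist_comm] using hpq
  have hperp : (c 0 - (p 0 + q 0) / 2) * (q 0 - p 0) + (c 1 - (p 1 + q 1) / 2) * (q 1 - p 1) = 0 := by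
    have hsq := congrArg (· ^ 2) h
    simp only [Pt.dist_sq_eq] at hsq
    linear_combination hsq / 2
  refine ⟨((c 0 - (p 0 + q 0) / 2) * (p 1 - q 1) + (c 1 - (p 1 + q 1) / 2) * (q 0 - p 0)) /
    ((q 0 - p 0) ^ 2 + (q 1 - p 1) ^ 2), ?_⟩
  ext i
  fin_cases i
  · change c 0 = bisectorPoint p q _ 0
    rw [bisectorPoint_apply_zero]
    field_simp
    linear_combination 2 * (q 0 - p 0) * hperp
  · change c 1 = bisectorPoint p q _ 1
    rw [bisectorPoint_apply_one]
    field_simp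
    linear_combination 2 * (q 1 - p 1) * hperp

lemma dist_bisectorPoint_lt_iff :
    dist x (bisectorPoint p q t) < dist p (bisectorPoint p q t) ↔
      diametralPower p q x < 2 * t * orient p q x := by
  rw [← sq_lt_sq₀ dist_nonneg dist_nonneg, ← sub_neg, dist_bisectorPoint_sq_sub, sub_neg]

lemma dist_bisectorPoint_lt_iff_of_pos (hx : 0 < orient p q x) :
    dist x (bisectorPoint p q t) < dist p (bisectorPoint p q t) ↔ circumParam p q x < t := by
  rw [dist_bisectorPoint_lt_iff, circumParam, div_lt_iff₀ (by positivity)]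
  constructor <;> intro h <;> linarith

lemma dist_bisectorPoint_lt_iff_of_neg (hx : orient p q x < 0) :
    dist x (bisectorPoint p q t) < dist p (bisectorPoint p q t) ↔ t < circumParam p q x := by
  rw [dist_bisectorPoint_lt_iff, circumParam, lt_div_iff_of_neg (by linarith)]
  constructor <;> intro h <;> linarith

lemma dist_bisectorPoint_eq_iff (hx : orient p q x ≠ 0) :
    dist x (bisectorPoint p q t) = dist p (bisectorPoint p q t) ↔ t = circumParam p q x := by
  rw [← sq_eq_sq₀ dist_nonneg dist_nonneg, ← sub_eq_zero, dist_bisectorPoint_sq_sub, circumParam,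
    eq_div_iff (mul_ne_zero two_ne_zero hx)]
  constructor <;> intro h <;> linarith

end Bisector

section Delaunay

variable {P : Finset Pt} {p q : Pt}

lemma exists_empty_disc_iff_exists_bisectorPoint (hpq : p ≠ q) :
    (∃ c : Pt, ∃ ρ : ℝ, dist p c = ρ ∧ dist q c = ρ ∧ ∀ x ∈ P, ¬ dist x c < ρ) ↔
      ∃ t, ∀ x ∈ P, ¬ dist x (bisectorPoint p q t) < dist p (bisectorPoint p q t) := by
  constructor
  · rintro ⟨c, ρ, rfl, hq, hP⟩
    obtain ⟨t, rfl⟩ := exists_eq_bisectorPoint hpq hq.symm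
    exact ⟨t, hP⟩
  · rintro ⟨t, hP⟩
    exact ⟨_, _, rfl, dist_right_bisectorPoint, hP⟩

lemma forall_not_dist_bisectorPoint_lt_iff {t : ℝ}
    (hgen : ∀ x ∈ P, x ≠ p → x ≠ q → orient p q x ≠ 0) :
    (∀ x ∈ P, ¬ dist x (bisectorPoint p q t) < dist p (bisectorPoint p q t)) ↔
      (∀ a ∈ P.filter (orient p q · < 0), circumParam p q a ≤ t) ∧
        ∀ b ∈ P.filter (0 < orient p q ·), t ≤ circumParam p q b := by
  simp only [mem_filter, and_imp]
  constructor
  · refine fun hP => ⟨fun a ha hneg => ?_, fun b hb hpos => ?_⟩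
    · exact not_lt.mp ((dist_bisectorPoint_lt_iff_of_neg hneg).not.mp (hP a ha))
    · exact not_lt.mp ((dist_bisectorPoint_lt_iff_of_pos hpos).not.mp (hP b hb))
  · rintro ⟨hneg, hpos⟩ x hx
    by_cases hxp : x = p
    · rw [hxp]; exact lt_irrefl _
    by_cases hxq : x = q
    · rw [hxq, dist_right_bisectorPoint]; exact lt_irrefl _
    rcases (hgen x hx hxp hxq).lt_or_gt with h | h
    · rw [dist_bisectorPoint_lt_iff_of_neg h]; exact not_lt.mpr (hneg x hx h)
    · rw [dist_bisectorPoint_lt_iff_of_pos h]; exact not_lt.mpr (hpos x hx h)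

lemma exists_empty_disc_iff (hpq : p ≠ q) (hgen : ∀ x ∈ P, x ≠ p → x ≠ q → orient p q x ≠ 0) :
    (∃ c : Pt, ∃ ρ : ℝ, dist p c = ρ ∧ dist q c = ρ ∧ ∀ x ∈ P, ¬ dist x c < ρ) ↔
      ∀ a ∈ P, orient p q a < 0 → ∀ b ∈ P, 0 < orient p q b →
        circumParam p q a ≤ circumParam p q b := by
  simp_rw [exists_empty_disc_iff_exists_bisectorPoint hpq,
    forall_not_dist_bisectorPoint_lt_iff hgen, exists_forall_le_and_forall_le_iff]
  simp only [mem_filter, and_imp]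

lemma exists_circumdisc_dist_lt_iff (hpq : p ≠ q) {a b : Pt} (ha : orient p q a ≠ 0) :
    (∃ c : Pt, ∃ ρ : ℝ, dist p c = ρ ∧ dist q c = ρ ∧ dist a c = ρ ∧ dist b c < ρ) ↔
      dist b (bisectorPoint p q (circumParam p q a)) <
        dist p (bisectorPoint p q (circumParam p q a)) := by
  constructor
  · rintro ⟨c, ρ, rfl, hq, hac, hb⟩
    obtain ⟨t, rfl⟩ := exists_eq_bisectorPoint hpq hq.symm
    rwa [← (dist_bisectorPoint_eq_iff ha).mp hac]
  · intro hb
    exact ⟨_, _, rfl, dist_right_bisectorPoint, (dist_bisectorPoint_eq_iff ha).mpr rfl, hb⟩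

lemma exists_violating_pair_iff (hpq : p ≠ q) :
    (∃ a ∈ P, ∃ b ∈ P, a ≠ p ∧ a ≠ q ∧ b ≠ p ∧ b ≠ q ∧
        orient p q a * orient p q b < 0 ∧
        ∃ c : Pt, ∃ ρ : ℝ, dist p c = ρ ∧ dist q c = ρ ∧ dist a c = ρ ∧ dist b c < ρ) ↔
      ∃ a ∈ P, orient p q a < 0 ∧ ∃ b ∈ P, 0 < orient p q b ∧
        circumParam p q b < circumParam p q a := by
  constructor
  · rintro ⟨a, ha, b, hb, -, -, -, -, hab, hdisc⟩
    rw [exists_circumdisc_dist_lt_iff hpq (left_ne_zero_of_mul hab.ne)] at hdisc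
    rcases mul_neg_iff.mp hab with ⟨hapos, hbneg⟩ | ⟨haneg, hbpos⟩
    · exact ⟨b, hb, hbneg, a, ha, hapos, (dist_bisectorPoint_lt_iff_of_neg hbneg).mp hdisc⟩
    · exact ⟨a, ha, haneg, b, hb, hbpos, (dist_bisectorPoint_lt_iff_of_pos hbpos).mp hdisc⟩
  · rintro ⟨a, ha, haneg, b, hb, hbpos, hlt⟩
    refine ⟨a, ha, b, hb, ?_, ?_, ?_, ?_, mul_neg_of_neg_of_pos haneg hbpos,
      (exists_circumdisc_dist_lt_iff hpq haneg.ne).mpr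
        ((dist_bisectorPoint_lt_iff_of_pos hbpos).mpr hlt)⟩ <;>
      rintro rfl <;> simp at haneg hbpos

end Delaunay

theorem stmt9_general (P : Finset Pt) (p q : Pt) (hpq : p ≠ q)
    (hgen : ∀ x ∈ P, x ≠ p → x ≠ q → orient p q x ≠ 0) :
    (¬ ∃ c : Pt, ∃ ρ : ℝ, dist p c = ρ ∧ dist q c = ρ ∧
        ∀ x ∈ P, ¬ dist x c < ρ) ↔
      ∃ a ∈ P, ∃ b ∈ P, a ≠ p ∧ a ≠ q ∧ b ≠ p ∧ b ≠ q ∧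
        orient p q a * orient p q b < 0 ∧
        ∃ c : Pt, ∃ ρ : ℝ, dist p c = ρ ∧ dist q c = ρ ∧ dist a c = ρ ∧ dist b c < ρ := by
  rw [exists_empty_disc_iff hpq hgen, exists_violating_pair_iff hpq]
  push Not
  rfl

/-- Let `P` be a finite planar point set containing the distinct points `p, q`, with no
point of `P \ {p, q}` on the line `pq`.  Then no closed disc with `p, q` on its boundary
has open interior disjoint from `P`, iff some pair `a, b ∈ P \ {p, q}` lying in opposite
open halfplanes of the line `pq` is a violating pair: `b` lies in the open interior of
the circumdisc of `p, q, a`. -/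
theorem stmt9 (P : Finset Pt) (p q : Pt) (hp : p ∈ P) (hq : q ∈ P) (hpq : p ≠ q)
    (hgen : ∀ x ∈ P, x ≠ p → x ≠ q → orient p q x ≠ 0) :
    (¬ ∃ c : Pt, ∃ ρ : ℝ, dist p c = ρ ∧ dist q c = ρ ∧
        ∀ x ∈ P, ¬ dist x c < ρ) ↔
      ∃ a ∈ P, ∃ b ∈ P, a ≠ p ∧ a ≠ q ∧ b ≠ p ∧ b ≠ q ∧
        orient p q a * orient p q b < 0 ∧
        ∃ c : Pt, ∃ ρ : ℝ, dist p c = ρ ∧ dist q c = ρ ∧ dist a c = ρ ∧ dist b c < ρ :=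
  stmt9_general P p q hpq hgen
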